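/- For all integers c ≥ 1, n ≥ 0, and k ≥ 0, the colored Mahonian number admits the decomposition i_c(n,k) = ∑_{a ≥ 0, b ≥ 0, c·a + b = k} |Com^{<c}_{n,b}| · i(n,a), where Com^{<c}_{n,b} is the set of n-tuples (b_1,…,b_n) of integers with 0 ≤ b_i < c for all i and b_1 + ⋯ + b_n = b, and i(n,a) is the classical Mahonian number. -/

import Mathlib

open Finset

/-- The inversion number of a permutation of `Fin n`:
`inv(π) = #{(i,j) : i < j, π(i) > π(j)}`. -/
def invNum {n : ℕ} (π : Equiv.Perm (Fin n)) : ℕ :=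
  ((Finset.univ : Finset (Fin n × Fin n)).filter
    (fun p => p.1 < p.2 ∧ π p.2 < π p.1)).card

/-- The colored inversion statistic on a colored permutation `σ = (π, f)`:
`inv_c(σ) = inv(π) + ∑ f(j) + c·#{(i,j) : i < j, π(i) < π(j), f(j) ≠ 0}`. -/
def invC (c : ℕ) {n : ℕ} (σ : Equiv.Perm (Fin n) × (Fin n → Fin c)) : ℕ :=
  invNum σ.1 + (∑ j, (σ.2 j : ℕ)) +
    c * ((Finset.univ : Finset (Fin n × Fin n)).filter
      (fun p => p.1 < p.2 ∧ σ.1 p.1 < σ.1 p.2 ∧ (σ.2 p.2 : ℕ) ≠ 0)).card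

/-- The colored Mahonian number `i_c(n,k)`: the number of colored permutations
of size `n` with exactly `k` colored inversions. -/
noncomputable def mahonianC (c n k : ℕ) : ℕ :=
  Nat.card {σ : Equiv.Perm (Fin n) × (Fin n → Fin c) // invC c σ = k}

/-- The classical Mahonian number `i(n,a)`: the number of permutations of
`{1,…,n}` with exactly `a` inversions. -/
noncomputable def mahonian (n a : ℕ) : ℕ :=
  Nat.card {π : Equiv.Perm (Fin n) // invNum π = a}

/-- `|Com^{<c}_{n,b}|`: the number of `n`-tuples `(b₁,…,bₙ)` of integers with
`0 ≤ bᵢ < c` for all `i` and `b₁ + ⋯ + bₙ = b`. -/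
noncomputable def comCount (c n b : ℕ) : ℕ :=
  Nat.card {t : Fin n → ℕ // (∀ i, t i < c) ∧ ∑ i, t i = b}

/-!
Deleting the entry in the last position of a colored permutation of size `m + 1`, of value `v`
and color `r` (both counted from `0`), lowers `inv_c` by `(m - v) + r + c·[r ≠ 0]·v` and lowers
`c·inv(π) + ∑ f` by `c·(m - v) + r`. As `(v, r)` varies, each of these weights runs bijectively
over `{0, …, c(m + 1) - 1}`, so by induction on the size some bijection of colored permutations
carries `inv_c` to `c·inv(π) + ∑ f`. Counting pairs `(π, f)` by the value `(a, b)` of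
`(inv(π), ∑ f)` then gives the decomposition.
-/

open Equiv

section

variable {m : ℕ}

def permInsertLast (v : Fin (m + 1)) (σ : Perm (Fin m)) : Perm (Fin (m + 1)) :=
  (finSuccEquiv' (Fin.last m)).trans ((optionCongr σ).trans (finSuccEquiv' v).symm)

@[simp] lemma permInsertLast_last (v : Fin (m + 1)) (σ : Perm (Fin m)) :
    permInsertLast v σ (Fin.last m) = v := by
  simp [permInsertLast, finSuccEquiv'_symm_none]

@[simp] lemma permInsertLast_castSucc (v : Fin (m + 1)) (σ : Perm (Fin m)) (j : Fin m) :
    permInsertLast v σ j.castSucc = v.succAbove (σ j) := by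
  simp [permInsertLast, finSuccEquiv'_last_apply_castSucc, finSuccEquiv'_symm_some]

lemma permInsertLast_injective :
    Function.Injective fun p : Fin (m + 1) × Perm (Fin m) => permInsertLast p.1 p.2 := by
  rintro ⟨v, σ⟩ ⟨w, τ⟩ h
  obtain rfl : v = w := by simpa using congr($h (Fin.last m))
  exact Prod.ext rfl <| Equiv.ext fun j => Fin.succAbove_right_injective (p := v) <| by
    simpa using congr($h j.castSucc)

noncomputable def permInsertLastEquiv (m : ℕ) :
    Fin (m + 1) × Perm (Fin m) ≃ Perm (Fin (m + 1)) :=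
  .ofBijective _ <| (Fintype.bijective_iff_injective_and_card _).2
    ⟨permInsertLast_injective, by simp [Fintype.card_perm, Nat.factorial_succ]⟩

lemma card_filter_pairs_finSucc (Q : Fin (m + 1) × Fin (m + 1) → Prop) [DecidablePred Q]
    (hQ : ∀ j, ¬ Q (Fin.last m, j)) :
    #{p | Q p} = #{p : Fin m × Fin m | Q (p.1.castSucc, p.2.castSucc)} +
      #{i : Fin m | Q (i.castSucc, Fin.last m)} := by
  simp only [Finset.card_filter, Fintype.sum_prod_type, Fin.sum_univ_castSucc, hQ,
    Finset.sum_add_distrib, if_false, Finset.sum_const_zero, add_zero]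

lemma card_filter_succAbove_perm (v : Fin (m + 1)) (σ : Perm (Fin m))
    (P : Fin (m + 1) → Prop) [DecidablePred P] (hv : ¬ P v) :
    #{i | P (v.succAbove (σ i))} = #{x | P x} := by
  calc #{i | P (v.succAbove (σ i))} = #{j | P (v.succAbove j)} := card_equiv σ (by simp)
    _ = #{x | P x} := by
      simp only [Finset.card_filter, Fin.sum_univ_succAbove _ v, hv, if_false, zero_add]

lemma invNum_permInsertLast (v : Fin (m + 1)) (σ : Perm (Fin m)) :
    invNum (permInsertLast v σ) = invNum σ + (m - v) := by
  rw [invNum, card_filter_pairs_finSucc _ (by simp [(Fin.le_last _).not_gt])]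
  congr 1
  · simp [Fin.succAbove_lt_succAbove_iff, invNum]
  · simp only [Fin.castSucc_lt_last, true_and, permInsertLast_last, permInsertLast_castSucc]
    rw [card_filter_succAbove_perm v σ (v < ·) (lt_irrefl v), filter_lt_eq_Ioi, Fin.card_Ioi]
    omega

variable {c : ℕ}

def coloredAscents {n : ℕ} (σ : Perm (Fin n) × (Fin n → Fin c)) : ℕ :=
  #{p : Fin n × Fin n | p.1 < p.2 ∧ σ.1 p.1 < σ.1 p.2 ∧ (σ.2 p.2 : ℕ) ≠ 0}

lemma invC_eq_coloredAscents {n : ℕ} (σ : Perm (Fin n) × (Fin n → Fin c)) :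
    invC c σ = invNum σ.1 + ∑ j, (σ.2 j : ℕ) + c * coloredAscents σ := rfl

lemma coloredAscents_permInsertLast_snoc (v : Fin (m + 1)) (r : Fin c) (σ : Perm (Fin m))
    (g : Fin m → Fin c) :
    coloredAscents (permInsertLast v σ, Fin.snoc g r) =
      coloredAscents (σ, g) + if (r : ℕ) = 0 then 0 else (v : ℕ) := by
  rw [coloredAscents, card_filter_pairs_finSucc _ (by simp [(Fin.le_last _).not_gt])]
  congr 1
  · simp [Fin.succAbove_lt_succAbove_iff, coloredAscents]
  · split_ifs with hr
    · simp [hr]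
    · simp only [Fin.castSucc_lt_last, true_and, permInsertLast_last, permInsertLast_castSucc,
        Fin.snoc_last, ne_eq, hr, not_false_eq_true, and_true]
      rw [card_filter_succAbove_perm v σ (· < v) (lt_irrefl v), filter_gt_eq_Iio, Fin.card_Iio]

noncomputable def coloredInsertEquiv (c m : ℕ) :
    (Fin (m + 1) × Fin c) × (Perm (Fin m) × (Fin m → Fin c)) ≃
      Perm (Fin (m + 1)) × (Fin (m + 1) → Fin c) :=
  (prodProdProdComm _ _ _ _).trans
    ((permInsertLastEquiv m).prodCongr (Fin.snocEquiv fun _ => Fin c))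

@[simp] lemma coloredInsertEquiv_apply (v : Fin (m + 1)) (r : Fin c) (σ : Perm (Fin m))
    (g : Fin m → Fin c) :
    coloredInsertEquiv c m ((v, r), σ, g) = (permInsertLast v σ, Fin.snoc g r) := rfl

lemma sum_snoc_val (g : Fin m → Fin c) (r : Fin c) :
    ∑ j, ((Fin.snoc g r : Fin (m + 1) → Fin c) j : ℕ) = ∑ j, (g j : ℕ) + r := by
  simp [Fin.sum_univ_castSucc]

def insertionWeight (c m : ℕ) (p : Fin (m + 1) × Fin c) : ℕ :=
  m - p.1 + p.2 + c * if (p.2 : ℕ) = 0 then 0 else (p.1 : ℕ)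

lemma invC_coloredInsertEquiv (p : Fin (m + 1) × Fin c) (x : Perm (Fin m) × (Fin m → Fin c)) :
    invC c (coloredInsertEquiv c m (p, x)) = invC c x + insertionWeight c m p := by
  rcases p with ⟨v, r⟩
  rcases x with ⟨σ, g⟩
  rw [invC_eq_coloredAscents, invC_eq_coloredAscents, coloredInsertEquiv_apply,
    invNum_permInsertLast, sum_snoc_val, coloredAscents_permInsertLast_snoc, insertionWeight]
  ring

def invScaled (c : ℕ) {n : ℕ} (σ : Perm (Fin n) × (Fin n → Fin c)) : ℕ :=
  c * invNum σ.1 + ∑ j, (σ.2 j : ℕ)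

lemma invScaled_coloredInsertEquiv (p : Fin (m + 1) × Fin c)
    (x : Perm (Fin m) × (Fin m → Fin c)) :
    invScaled c (coloredInsertEquiv c m (p, x)) = invScaled c x + (c * (m - p.1) + p.2) := by
  rcases p with ⟨v, r⟩
  rcases x with ⟨σ, g⟩
  simp only [invScaled, coloredInsertEquiv_apply, invNum_permInsertLast, sum_snoc_val]
  ring

lemma insertionWeight_lt (p : Fin (m + 1) × Fin c) : insertionWeight c m p < (m + 1) * c := by
  obtain ⟨⟨v, hv⟩, ⟨r, hr⟩⟩ := p
  simp only [insertionWeight]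
  split_ifs <;> zify [Nat.le_of_lt_succ hv] <;> nlinarith

-- For `r = 0` the weights are `0, …, m`; for `r ≠ 0` they are `m + r + (c - 1) v` with
-- `1 ≤ r < c`, all distinct and larger than `m`.
lemma insertionWeight_injective : Function.Injective (insertionWeight c m) := by
  rintro ⟨⟨v, hv⟩, ⟨r, hr⟩⟩ ⟨⟨v', hv'⟩, ⟨r', hr'⟩⟩ h
  simp only [insertionWeight] at h
  suffices v = v' by subst this; split_ifs at h <;> simp_all <;> omega
  split_ifs at h with h0 h0' h0' <;> zify [Nat.le_of_lt_succ hv, Nat.le_of_lt_succ hv'] at h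
  · omega
  · nlinarith [Nat.one_le_iff_ne_zero.2 h0']
  · nlinarith [Nat.one_le_iff_ne_zero.2 h0]
  · have hr0 : 1 ≤ r := Nat.one_le_iff_ne_zero.2 h0
    have hr0' : 1 ≤ r' := Nat.one_le_iff_ne_zero.2 h0'
    rcases lt_trichotomy v v' with hlt | rfl | hgt
    · nlinarith
    · rfl
    · nlinarith

noncomputable def insertionWeightEquiv (c m : ℕ) : Fin (m + 1) × Fin c ≃ Fin ((m + 1) * c) :=
  .ofBijective (fun p => ⟨insertionWeight c m p, insertionWeight_lt p⟩) <|
    (Fintype.bijective_iff_injective_and_card _).2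
      ⟨fun _ _ h => insertionWeight_injective (Fin.val_eq_of_eq h), by simp⟩

def scaledWeightEquiv (c m : ℕ) : Fin (m + 1) × Fin c ≃ Fin ((m + 1) * c) :=
  (Fin.revPerm.prodCongr (Equiv.refl _)).trans finProdFinEquiv

lemma scaledWeightEquiv_apply_val (p : Fin (m + 1) × Fin c) :
    (scaledWeightEquiv c m p : ℕ) = c * (m - p.1) + p.2 := by
  simp [scaledWeightEquiv, Fin.val_rev, add_comm]

lemma exists_perm_scaledWeight_eq_insertionWeight (c m : ℕ) :
    ∃ φ : Perm (Fin (m + 1) × Fin c),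
      ∀ p, c * (m - (φ p).1) + (φ p).2 = insertionWeight c m p :=
  ⟨(insertionWeightEquiv c m).trans (scaledWeightEquiv c m).symm, fun p => by
    rw [← scaledWeightEquiv_apply_val, Equiv.trans_apply, Equiv.apply_symm_apply]; rfl⟩

theorem exists_equiv_invScaled_eq_invC (c n : ℕ) :
    ∃ Φ : Perm (Fin n) × (Fin n → Fin c) ≃ Perm (Fin n) × (Fin n → Fin c),
      ∀ σ, invScaled c (Φ σ) = invC c σ := by
  induction n with
  | zero => exact ⟨Equiv.refl _, fun σ => by simp [invScaled, invC, invNum]⟩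
  | succ m ih =>
    obtain ⟨Φ, hΦ⟩ := ih
    obtain ⟨φ, hφ⟩ := exists_perm_scaledWeight_eq_insertionWeight c m
    let e := coloredInsertEquiv c m
    refine ⟨e.symm.trans ((φ.prodCongr Φ).trans e), fun σ => ?_⟩
    obtain ⟨⟨p, x⟩, rfl⟩ := e.surjective σ
    simp only [Equiv.trans_apply, Equiv.symm_apply_apply, Equiv.prodCongr_apply, Prod.map]
    rw [invScaled_coloredInsertEquiv, invC_coloredInsertEquiv, hΦ, hφ]

end

lemma card_mul_add_eq {α β : Type*} [Fintype α] [Fintype β] (f : α → ℕ) (g : β → ℕ)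
    {c : ℕ} (hc : 1 ≤ c) (k : ℕ) :
    Nat.card {x : α × β // c * f x.1 + g x.2 = k} =
      ∑ p ∈ (range (k + 1) ×ˢ range (k + 1)).filter (fun p : ℕ × ℕ => c * p.1 + p.2 = k),
        Nat.card {b // g b = p.2} * Nat.card {a // f a = p.1} := by
  classical
  simp only [Nat.card_eq_fintype_card, Fintype.card_subtype]
  have hmaps : ∀ x ∈ ({x | c * f x.1 + g x.2 = k} : Finset (α × β)),
      (f x.1, g x.2) ∈
        (range (k + 1) ×ˢ range (k + 1)).filter (fun p => c * p.1 + p.2 = k) := by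
    intro x hx
    simp only [mem_filter, mem_univ, true_and, mem_product, mem_range] at hx ⊢
    exact ⟨⟨by nlinarith, by omega⟩, hx⟩
  rw [card_eq_sum_card_fiberwise hmaps]
  refine sum_congr rfl fun p hp => ?_
  rw [mul_comm, ← card_product, filter_filter]
  congr 1
  ext ⟨a, b⟩
  simp only [mem_filter, mem_univ, true_and, mem_product, Prod.ext_iff] at hp ⊢
  constructor
  · rintro ⟨-, h1, h2⟩
    exact ⟨h1, h2⟩
  · rintro ⟨h1, h2⟩
    exact ⟨by rw [h1, h2, hp.2], h1, h2⟩

lemma comCount_eq_card (c n b : ℕ) :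
    comCount c n b = Nat.card {g : Fin n → Fin c // ∑ j, (g j : ℕ) = b} :=
  Nat.card_congr
    { toFun t := ⟨fun i => ⟨t.1 i, t.2.1 i⟩, t.2.2⟩
      invFun g := ⟨fun i => g.1 i, fun i => (g.1 i).isLt, g.2⟩ }

/-- `i_c(n,k) = ∑_{a,b ≥ 0, c·a+b=k} |Com^{<c}_{n,b}| · i(n,a)`.  Since `c ≥ 1`,
every solution of `c·a + b = k` has `a ≤ k` and `b ≤ k`, so the sum below over
all pairs `(a,b) ∈ {0,…,k}² ` with `c·a + b = k` ranges over all solutions. -/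
theorem mahonianC_decomposition (c n k : ℕ) (hc : 1 ≤ c) :
    mahonianC c n k =
      ∑ p ∈ (Finset.range (k + 1) ×ˢ Finset.range (k + 1)).filter
          (fun p : ℕ × ℕ => c * p.1 + p.2 = k),
        comCount c n p.2 * mahonian n p.1 := by
  obtain ⟨Φ, hΦ⟩ := exists_equiv_invScaled_eq_invC c n
  have hcard : mahonianC c n k = Nat.card {σ // invScaled c σ = k} :=
    Nat.card_congr (Φ.subtypeEquiv fun σ => by rw [hΦ])
  simp only [hcard, comCount_eq_card, mahonian]
  exact card_mul_add_eq invNum (fun g : Fin n → Fin c => ∑ j, (g j : ℕ)) hc k
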